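/- arXiv:1902.07241 — 3 statements merged into one kernel-verified Lean document; each statement's English description precedes it below -/
import Mathlib

section
/- There exists a digraph D containing a Hamiltonian directed cycle (a directed cycle passing through every vertex of D) whose dominator chromatic number is strictly less than |V(D)|. -/
/-- `c` is a dominator coloring of the digraph with arc relation `A`: a proper coloring of
the underlying undirected graph such that every vertex with at least one out-neighbor
dominates some (nonempty) color class. -/
def IsDominatorColoring {V : Type*} (A : V → V → Prop) {k : ℕ} (c : V → Fin k) : Prop :=
  (∀ u v, A u v → c u ≠ c v) ∧
    ∀ v, (∃ u, A v u) → ∃ i : Fin k, (∃ u, c u = i) ∧ ∀ u, c u = i → A v u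

/-- The dominator chromatic number of a digraph: the least number of colors in a
dominator coloring. -/
noncomputable def domChrom {V : Type*} (A : V → V → Prop) : ℕ :=
  sInf {k | ∃ c : V → Fin k, IsDominatorColoring A c}

/-- `A` is an orientation of the simple graph `G`. -/
def IsOrientation {V : Type*} (G : SimpleGraph V) (A : V → V → Prop) : Prop :=
  ∀ u v, (G.Adj u v ↔ (A u v ∨ A v u)) ∧ ¬(A u v ∧ A v u)

/-- The minimum dominator chromatic number over all orientations of `G`. -/
noncomputable def minOrientDomChrom {V : Type*} (G : SimpleGraph V) : ℕ :=
  sInf {k | ∃ A : V → V → Prop, IsOrientation G A ∧ ∃ c : V → Fin k, IsDominatorColoring A c}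

/-!
The directed 5-cycle `0 → 1 → 2 → 3 → 4 → 0` with the chords `0 → 2` and `3 → 1` has a
dominator coloring with four colors: vertices `1` and `4` are non-adjacent and share a color,
the other color classes are singletons. Vertex `3` dominates the class `{1, 4}` and every other
vertex dominates the singleton class of one of its out-neighbors.
-/

theorem domChrom_le_of_isDominatorColoring {V : Type*} {A : V → V → Prop} {k : ℕ}
    {c : V → Fin k} (hc : IsDominatorColoring A c) : domChrom A ≤ k :=
  Nat.sInf_le ⟨c, hc⟩

def chordedPentagon (i j : Fin 5) : Prop :=
  j = i + 1 ∨ (i, j) = (0, 2) ∨ (i, j) = (3, 1)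

instance : DecidableRel chordedPentagon := fun i j => by
  unfold chordedPentagon; infer_instance

theorem chordedPentagon_irrefl (v : Fin 5) : ¬ chordedPentagon v v := by
  revert v; decide

theorem chordedPentagon_asymm (u v : Fin 5) : ¬ (chordedPentagon u v ∧ chordedPentagon v u) := by
  revert u v; decide

theorem chordedPentagon_succ (i j : Fin 5) (h : ((i : ℕ) + 1) % 5 = (j : ℕ)) :
    chordedPentagon i j := by
  revert i j; decide

theorem isDominatorColoring_chordedPentagon :
    IsDominatorColoring chordedPentagon (![0, 1, 2, 3, 1] : Fin 5 → Fin 4) :=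
  ⟨by decide, by decide⟩

/-- There exists a digraph `D` containing a Hamiltonian directed cycle whose
dominator chromatic number is strictly less than `|V(D)|`. -/
theorem exists_hamiltonianCycle_domChrom_lt_card :
    ∃ (n : ℕ) (A : Fin n → Fin n → Prop), 3 ≤ n ∧
      (∀ v, ¬ A v v) ∧ (∀ u v, ¬ (A u v ∧ A v u)) ∧
      (∃ p : Fin n ≃ Fin n, ∀ i j : Fin n, ((i : ℕ) + 1) % n = (j : ℕ) → A (p i) (p j)) ∧
      domChrom A < n :=
  ⟨5, chordedPentagon, by norm_num, chordedPentagon_irrefl, chordedPentagon_asymm,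
    ⟨Equiv.refl _, chordedPentagon_succ⟩,
    (domChrom_le_of_isDominatorColoring isDominatorColoring_chordedPentagon).trans_lt
      (by norm_num)⟩
end

section
/- For every k ≥ 1 and n = 4k+1, every orientation of the path P_n on n vertices has dominator chromatic number at least k+2; that is, χ_d(P_{4k+1}) ≥ k+2. -/
open Finset SimpleGraph

section PathGraph

variable {n : ℕ}

lemma pathGraph_two_mul_card_le_of_isIndepSet {s : Finset (Fin n)}
    (hs : (pathGraph n).IsIndepSet (s : Set (Fin n))) : 2 * #s ≤ n + 1 := by
  have : #s ≤ #(range ((n + 1) / 2)) := by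
    refine card_le_card_of_injOn (fun x => (x : ℕ) / 2) (fun x _ => ?_) fun x hx y hy hxy => ?_
    · have := x.isLt
      simp only [coe_range, Set.mem_Iio]
      omega
    · by_contra hne
      refine hs hx hy hne (pathGraph_adj.mpr ?_)
      have := Fin.val_ne_of_ne hne
      simp only at hxy
      omega
  simp only [card_range] at this
  omega

lemma pathGraph_card_le_two_of_forall_adj {s : Finset (Fin n)} {v : Fin n}
    (h : ∀ u ∈ s, (pathGraph n).Adj u v) : #s ≤ 2 := by
  by_contra! hs
  obtain ⟨a, ha, b, hb, c, hc, hab, hac, hbc⟩ := two_lt_card.mp hs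
  have := pathGraph_adj.mp (h a ha)
  have := pathGraph_adj.mp (h b hb)
  have := pathGraph_adj.mp (h c hc)
  have := Fin.val_ne_of_ne hab
  have := Fin.val_ne_of_ne hac
  have := Fin.val_ne_of_ne hbc
  omega

lemma pathGraph_card_le_one_of_forall_adj_adj {s : Finset (Fin n)} {u₁ u₂ : Fin n}
    (hne : u₁ ≠ u₂) (h : ∀ v ∈ s, (pathGraph n).Adj u₁ v ∧ (pathGraph n).Adj u₂ v) :
    #s ≤ 1 := by
  refine card_le_one.mpr fun a ha b hb => Fin.ext ?_
  have := pathGraph_adj.mp (h a ha).1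
  have := pathGraph_adj.mp (h a ha).2
  have := pathGraph_adj.mp (h b hb).1
  have := pathGraph_adj.mp (h b hb).2
  have := Fin.val_ne_of_ne hne
  omega

/-- A path contains no `K_{1,3}` and no `K_{2,2}`. -/
lemma pathGraph_card_add_card_le_three {s t : Finset (Fin n)} (hs : s.Nonempty)
    (ht : t.Nonempty) (h : ∀ u ∈ s, ∀ v ∈ t, (pathGraph n).Adj u v) : #s + #t ≤ 3 := by
  obtain ⟨u, hu⟩ := hs
  obtain ⟨v, hv⟩ := ht
  have hs₂ : #s ≤ 2 := pathGraph_card_le_two_of_forall_adj fun u hu => h u hu v hv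
  have ht₂ : #t ≤ 2 :=
    pathGraph_card_le_two_of_forall_adj fun v hv => (h u hu v hv).symm
  by_contra! hst
  obtain ⟨u₁, hu₁, u₂, hu₂, hne⟩ := one_lt_card.mp (show 1 < #s by omega)
  have := pathGraph_card_le_one_of_forall_adj_adj hne fun v hv => ⟨h u₁ hu₁ v hv, h u₂ hu₂ v hv⟩
  omega

end PathGraph

section Orientation

variable {V : Type*} {G : SimpleGraph V} {A : V → V → Prop}

lemma IsOrientation.adj_of_arc (hA : IsOrientation G A) {u v : V} (h : A u v) : G.Adj u v :=
  ((hA u v).1).mpr (Or.inl h)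

lemma IsOrientation.arc_or_arc_of_adj (hA : IsOrientation G A) {u v : V} (h : G.Adj u v) :
    A u v ∨ A v u :=
  ((hA u v).1).mp h

lemma IsOrientation.irrefl (hA : IsOrientation G A) (v : V) : ¬A v v :=
  fun h => (hA.adj_of_arc h).ne rfl

lemma IsOrientation.isIndepSet_sinks (hA : IsOrientation G A) :
    G.IsIndepSet {v | ∀ u, ¬A v u} := fun u hu v hv _ huv =>
  (hA.arc_or_arc_of_adj huv).elim (hu v) (hv u)

def DominatesClass (A : V → V → Prop) {m : ℕ} (c : V → Fin m) (v : V) (i : Fin m) : Prop :=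
  (∃ u, c u = i) ∧ ∀ u, c u = i → A v u

variable {m : ℕ} {c : V → Fin m}

lemma isDominatorColoring_of_injective (hA : ∀ v, ¬A v v) (hc : Function.Injective c) :
    IsDominatorColoring A c :=
  ⟨fun u _ huv hcuv => hA u (hc hcuv ▸ huv),
    fun _ ⟨u, hu⟩ => ⟨c u, ⟨u, rfl⟩, fun _ hw => hc hw ▸ hu⟩⟩

lemma IsDominatorColoring.exists_dominatesClass (hc : IsDominatorColoring A c) {v : V}
    (hv : ∃ u, A v u) : ∃ i, DominatesClass A c v i :=
  hc.2 v hv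

lemma IsDominatorColoring.isIndepSet_colorClass (hA : IsOrientation G A)
    (hc : IsDominatorColoring A c) (i : Fin m) : G.IsIndepSet {v | c v = i} :=
  fun u hu v hv _ huv =>
    (hA.arc_or_arc_of_adj huv).elim (fun h => hc.1 u v h (hu.trans hv.symm))
      (fun h => hc.1 v u h (hv.trans hu.symm))

end Orientation

section PathOrientation

open scoped Classical

variable {k m : ℕ} {A : Fin (4 * k + 1) → Fin (4 * k + 1) → Prop} {c : Fin (4 * k + 1) → Fin m}

lemma card_colorClass_add_mul_card_dominators_le (hk : 1 ≤ k)
    (hA : IsOrientation (pathGraph (4 * k + 1)) A) (hc : IsDominatorColoring A c) (i : Fin m) :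
    #{v | c v = i} + k * #{v | DominatesClass A c v i} ≤ 2 * k + 1 := by
  rcases eq_empty_or_nonempty {v | DominatesClass A c v i} with hD | ⟨v, hv⟩
  · have := pathGraph_two_mul_card_le_of_isIndepSet (s := {v | c v = i})
      (by simpa using hc.isIndepSet_colorClass hA i)
    rw [hD, card_empty]
    omega
  · obtain ⟨u, hu⟩ := (mem_filter.mp hv).2.1
    have hjoin := pathGraph_card_add_card_le_three (s := {v | c v = i})
      ⟨u, by simpa using hu⟩ ⟨v, hv⟩ fun u hu w hw =>
        (hA.adj_of_arc ((mem_filter.mp hw).2.2 u (mem_filter.mp hu).2)).symm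
    have : 1 ≤ #{v | c v = i} := card_pos.mpr ⟨u, by simpa using hu⟩
    have : 1 ≤ #{v | DominatesClass A c v i} := card_pos.mpr ⟨v, hv⟩
    have : #{v | DominatesClass A c v i} ≤ 2 := by omega
    interval_cases #{v | DominatesClass A c v i} <;> omega

lemma two_mul_le_sum_card_dominators (hA : IsOrientation (pathGraph (4 * k + 1)) A)
    (hc : IsDominatorColoring A c) :
    2 * k ≤ ∑ i, #{v | DominatesClass A c v i} := by
  have hsinks := pathGraph_two_mul_card_le_of_isIndepSet (s := {v | ∀ u, ¬A v u})
    (by simpa using hA.isIndepSet_sinks)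
  have hnonsinks : #{v | ∃ u, A v u} ≤ ∑ i, #{v | DominatesClass A c v i} := by
    refine (card_le_card fun v hv => ?_).trans card_biUnion_le
    obtain ⟨i, hi⟩ := hc.exists_dominatesClass (mem_filter.mp hv).2
    exact mem_biUnion.mpr ⟨i, mem_univ _, mem_filter.mpr ⟨mem_univ _, hi⟩⟩
  have := card_filter_add_card_filter_not (s := univ) (fun v : Fin (4 * k + 1) => ∃ u, A v u)
  simp only [card_univ, Fintype.card_fin, not_exists] at this
  omega

lemma add_two_le_of_isDominatorColoring (hk : 1 ≤ k)
    (hA : IsOrientation (pathGraph (4 * k + 1)) A) (hc : IsDominatorColoring A c) :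
    k + 2 ≤ m := by
  have hclasses : ∑ i, #{v | c v = i} = 4 * k + 1 := by
    simpa using (card_eq_sum_card_fiberwise (s := univ) (t := univ) (f := c)
      fun _ _ => mem_univ _).symm
  have hsum : ∑ i, (#{v | c v = i} + k * #{v | DominatesClass A c v i}) ≤ m * (2 * k + 1) := by
    simpa using sum_le_card_nsmul univ _ _ fun i _ =>
      card_colorClass_add_mul_card_dominators_le hk hA hc i
  rw [sum_add_distrib, ← mul_sum, hclasses] at hsum
  have := two_mul_le_sum_card_dominators hA hc
  nlinarith

end PathOrientation

/-- For every `k ≥ 1`, every orientation of the path `P_{4k+1}` has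
dominator chromatic number at least `k + 2`. -/
theorem domChrom_path_orientation_ge (k : ℕ) (hk : 1 ≤ k)
    (A : Fin (4 * k + 1) → Fin (4 * k + 1) → Prop)
    (hA : IsOrientation (SimpleGraph.pathGraph (4 * k + 1)) A) :
    k + 2 ≤ domChrom A :=
  le_csInf ⟨4 * k + 1, id, isDominatorColoring_of_injective hA.irrefl Function.injective_id⟩
    fun _ ⟨_, hc⟩ => add_two_le_of_isDominatorColoring hk hA hc
end

section
/- Let D be a simple digraph whose underlying undirected graph is connected and has at least one edge. Then the dominator chromatic number of D equals 2 if and only if there is a partition of the vertex set of D into two nonempty sets X and Y such that for every x ∈ X and every y ∈ Y the arc x → y is in D, and these are the only arcs of D (i.e., D is an orientation of the complete bipartite graph K_{m,n} with all arcs directed from X to Y). -/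
section DominatorColoring

variable {V : Type*} {A : V → V → Prop}

theorem domChrom_le {k : ℕ} {c : V → Fin k} (hc : IsDominatorColoring A c) : domChrom A ≤ k :=
  Nat.sInf_le ⟨c, hc⟩

theorem exists_isDominatorColoring_of_domChrom_eq {k : ℕ} (h : domChrom A = k) (hk : k ≠ 0) :
    ∃ c : V → Fin k, IsDominatorColoring A c := by
  have hmem : domChrom A ∈ {k | ∃ c : V → Fin k, IsDominatorColoring A c} :=
    Nat.sInf_mem (Nat.nonempty_of_pos_sInf (show 0 < domChrom A by omega))
  rwa [h] at hmem

theorem IsDominatorColoring.two_le {k : ℕ} {c : V → Fin k} (hc : IsDominatorColoring A c)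
    {u v : V} (huv : A u v) : 2 ≤ k := by
  by_contra! hk
  interval_cases k
  · exact (c u).elim0
  · exact hc.1 u v huv (Subsingleton.elim _ _)

theorem domChrom_eq_two_of_isDominatorColoring {c : V → Fin 2} (hc : IsDominatorColoring A c)
    {u v : V} (huv : A u v) : domChrom A = 2 :=
  le_antisymm (domChrom_le hc) (le_csInf ⟨2, c, hc⟩ fun _ ⟨_, hc'⟩ => hc'.two_le huv)

open Classical in
theorem isDominatorColoring_of_rel_iff {X : Set V} (hXc : Xᶜ.Nonempty)
    (harc : ∀ u v, A u v ↔ u ∈ X ∧ v ∉ X) :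
    IsDominatorColoring A fun v => if v ∈ X then (0 : Fin 2) else 1 := by
  refine ⟨fun u v huv => ?_, fun v ⟨u, hvu⟩ => ⟨1, ?_, fun w hw => ?_⟩⟩
  · obtain ⟨hu, hv⟩ := (harc u v).1 huv
    simp [hu, hv]
  · obtain ⟨y, hy⟩ := hXc
    exact ⟨y, if_neg hy⟩
  · have hw : w ∉ X := fun h => by simp [h] at hw
    exact (harc v w).2 ⟨((harc v u).1 hvu).1, hw⟩

namespace IsDominatorColoring

variable {c : V → Fin 2}

theorem rel_of_color_ne (hc : IsDominatorColoring A c) {v u : V} (hv : ∃ w, A v w)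
    (hu : c u ≠ c v) : A v u := by
  obtain ⟨_, ⟨w, rfl⟩, hdom⟩ := hc.2 v hv
  have hw : c w ≠ c v := (hc.1 v w (hdom w rfl)).symm
  exact hdom u (by omega)

theorem color_eq_of_exists_rel (hc : IsDominatorColoring A c)
    (hsimple : ∀ u v, ¬ (A u v ∧ A v u)) {v w : V} (hv : ∃ u, A v u)
    (hw : ∃ u, A w u) : c v = c w := by
  by_contra hne
  exact hsimple v w ⟨hc.rel_of_color_ne hv (Ne.symm hne), hc.rel_of_color_ne hw hne⟩

theorem rel_iff (hc : IsDominatorColoring A c) (hsimple : ∀ u v, ¬ (A u v ∧ A v u))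
    (hnot_isolated : ∀ v, ∃ w, A v w ∨ A w v) (u v : V) :
    A u v ↔ (∃ w, A u w) ∧ ¬ ∃ w, A v w := by
  have hsink : ∀ {u v}, A u v → ¬ ∃ w, A v w := fun huv hv =>
    hc.1 _ _ huv (hc.color_eq_of_exists_rel hsimple ⟨_, huv⟩ hv)
  refine ⟨fun huv => ⟨⟨v, huv⟩, hsink huv⟩, fun ⟨hu, hv⟩ => hc.rel_of_color_ne hu ?_⟩
  obtain ⟨w, hvw | hwv⟩ := hnot_isolated v
  · exact absurd ⟨w, hvw⟩ hv
  · rw [hc.color_eq_of_exists_rel hsimple hu ⟨v, hwv⟩]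
    exact (hc.1 w v hwv).symm

end IsDominatorColoring

end DominatorColoring

theorem domChrom_eq_two_iff_general {V : Type*} (A : V → V → Prop)
    (hsimple : ∀ u v, ¬ (A u v ∧ A v u))
    (hconn : (SimpleGraph.fromRel A).Connected) (hedge : ∃ u v, A u v) :
    domChrom A = 2 ↔
      ∃ X Y : Set V, X.Nonempty ∧ Y.Nonempty ∧
        (∀ v, v ∈ X ∨ v ∈ Y) ∧ (∀ v, ¬ (v ∈ X ∧ v ∈ Y)) ∧
        (∀ u v, A u v ↔ u ∈ X ∧ v ∈ Y) := by
  obtain ⟨a, b, hab⟩ := hedge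
  constructor
  · intro h
    obtain ⟨c, hc⟩ := exists_isDominatorColoring_of_domChrom_eq h two_ne_zero
    have : Nontrivial V := ⟨⟨a, b, fun h => hsimple a a ⟨h ▸ hab, h ▸ hab⟩⟩⟩
    have hnot_isolated (v : V) : ∃ w, A v w ∨ A w v :=
      (hconn.preconnected.exists_adj_of_nontrivial v).imp fun _ h => h.2
    have harc := hc.rel_iff hsimple hnot_isolated
    exact ⟨{v | ∃ w, A v w}, {v | ¬ ∃ w, A v w}, ⟨a, b, hab⟩, ⟨b, ((harc a b).1 hab).2⟩,
      fun v => em _, fun v h => h.2 h.1, harc⟩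
  · rintro ⟨X, Y, -, hY, hcover, hdisj, harc⟩
    obtain rfl : Y = Xᶜ :=
      Set.ext fun v => ⟨fun hv hx => hdisj v ⟨hx, hv⟩, (hcover v).resolve_left⟩
    exact domChrom_eq_two_of_isDominatorColoring (isDominatorColoring_of_rel_iff hY harc) hab

/-- A simple connected digraph with at least one edge has dominator
chromatic number `2` iff it is an orientation of a complete bipartite graph `K_{m,n}`
with all arcs directed from one part to the other. -/
theorem domChrom_eq_two_iff {V : Type*} [Fintype V] (A : V → V → Prop)
    (hirr : ∀ v, ¬ A v v) (hsimple : ∀ u v, ¬ (A u v ∧ A v u))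
    (hconn : (SimpleGraph.fromRel A).Connected) (hedge : ∃ u v, A u v) :
    domChrom A = 2 ↔
      ∃ X Y : Set V, X.Nonempty ∧ Y.Nonempty ∧
        (∀ v, v ∈ X ∨ v ∈ Y) ∧ (∀ v, ¬ (v ∈ X ∧ v ∈ Y)) ∧
        (∀ u v, A u v ↔ u ∈ X ∧ v ∈ Y) :=
  domChrom_eq_two_iff_general A hsimple hconn hedge
end
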